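/- Let 𝒱 = (W, {≼_w}, ⊏, V) be a finite Veltman model and 𝒱₀ = (W₀, ⊏₀, ≼₀, V₀) its unravelling, where W₀ is the set of nonempty finite ⊏-increasing sequences, σ ⊏₀ τ iff σ is τ with its last element removed, σ ≼₀ τ iff there is η with η ⊏₀ σ, η ⊏₀ τ and last(σ) ≼_{last(η)} last(τ), and σ V₀ p iff last(σ) V p. Then for every σ ∈ W₀ and every formula B of the interpretability language, 𝒱₀, σ ⊨ B iff 𝒱, last(σ) ⊨ B. -/

import Mathlib

/-- Formulas of the interpretability language: atoms, ⊥, → and the binary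
modality ▷. -/
inductive IFml : Type
  | atom : ℕ → IFml
  | bot  : IFml
  | imp  : IFml → IFml → IFml
  | rhd  : IFml → IFml → IFml
deriving DecidableEq

/-- `□A := ¬A ▷ ⊥`. -/
def ibox (A : IFml) : IFml := .rhd (.imp A .bot) .bot

/-- `◇A := ¬□¬A`. -/
def idia (A : IFml) : IFml := .imp (ibox (.imp A .bot)) .bot

/-- A Veltman model. -/
structure Veltman (W : Type*) where
  R : W → W → Prop
  /-- `S w u v` means `u ≼_w v`. -/
  S : W → W → W → Prop
  V : W → ℕ → Prop
  S_dom : ∀ w u v, S w u v → R w u ∧ R w v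
  S_refl : ∀ w u, R w u → S w u u
  S_trans : ∀ w u v z, S w u v → S w v z → S w u z
  R_S : ∀ w u v, R w u → R u v → S w u v
  S_R : ∀ w u v z, S w u v → R v z → R u z

/-- Forcing in a Veltman model. -/
def vforce {W : Type*} (M : Veltman W) : W → IFml → Prop
  | w, .atom n => M.V w n
  | _, .bot => False
  | w, .imp A B => vforce M w A → vforce M w B
  | w, .rhd A B => ∀ v, M.R w v → vforce M v A → ∃ z, M.S w v z ∧ vforce M z B

/-- The final element of a nonempty sequence of worlds. -/
def felW {W : Type*} [Inhabited W] (σ : List W) : W := σ.getLastD default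

/-- Worlds of the unravelling: nonempty finite ⊏-increasing sequences. -/
def IsWorldV {W : Type*} (M : Veltman W) (σ : List W) : Prop :=
  σ ≠ [] ∧ List.Chain' M.R σ

/-- `σ ⊏₀ τ` iff `σ` is `τ` with its last element removed. -/
def R0 {W : Type*} (M : Veltman W) (σ τ : List W) : Prop :=
  IsWorldV M σ ∧ IsWorldV M τ ∧ ∃ w, τ = σ ++ [w]

/-- `σ ≼₀ τ` iff there is `η ⊏₀ σ, τ` with `last σ ≼_{last η} last τ`. -/
def S0 {W : Type*} [Inhabited W] (M : Veltman W) (σ τ : List W) : Prop :=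
  ∃ η, R0 M η σ ∧ R0 M η τ ∧ M.S (felW η) (felW σ) (felW τ)

/-- Forcing in the unravelled structure `𝒱₀`, with the symmetric ▷-clause. -/
def uforce {W : Type*} [Inhabited W] (M : Veltman W) : List W → IFml → Prop
  | σ, .atom n => M.V (felW σ) n
  | _, .bot => False
  | σ, .imp A B => uforce M σ A → uforce M σ B
  | σ, .rhd A B => ∀ τ, R0 M σ τ →
      (∃ η, S0 M τ η ∧ uforce M η A) → (∃ η, S0 M τ η ∧ uforce M η B)


section
variable {W : Type*} [Inhabited W] (M : Veltman W)

lemma felW_concat (σ : List W) (v : W) : felW (σ ++ [v]) = v := by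
  simp [felW]

lemma felW_eq_getLast (σ : List W) (h : σ ≠ []) : felW σ = σ.getLast h := by
  simp [felW, List.getLastD_eq_getLast?, List.getLast?_eq_getLast h]

lemma world_concat {σ : List W} {v : W} (hσ : IsWorldV M σ)
    (hR : M.R (felW σ) v) : IsWorldV M (σ ++ [v]) := by
  obtain ⟨hne, hc⟩ := hσ
  refine ⟨by simp, List.isChain_append.2 ⟨hc, List.isChain_singleton v, ?_⟩⟩
  intro x hx y hy
  rw [List.getLast?_eq_getLast hne] at hx
  simp at hx hy
  subst hx; subst hy
  rwa [felW_eq_getLast σ hne] at hR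

lemma chain_last {σ : List W} {v : W} (hne : σ ≠ [])
    (hc : List.Chain' M.R (σ ++ [v])) : M.R (felW σ) v := by
  obtain ⟨-, -, h⟩ := List.isChain_append.1 hc
  rw [felW_eq_getLast σ hne]
  exact h _ (List.getLast?_eq_getLast hne) v rfl

lemma concat_inj {σ η : List W} {v u : W} (h : σ ++ [v] = η ++ [u]) :
    σ = η ∧ v = u := by
  have h1 : σ = η := by
    have := congrArg List.dropLast h
    simpa using this
  subst h1
  simpa using h

/-- Characterization of `S0 M (σ ++ [v]) η` for `σ` a world. -/
lemma S0_concat {σ : List W} {v : W} {η : List W}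
    (h : S0 M (σ ++ [v]) η) :
    ∃ u, η = σ ++ [u] ∧ M.S (felW σ) v u := by
  obtain ⟨η', ⟨_, _, w, hw⟩, ⟨_, hηw, u, hu⟩, hS⟩ := h
  obtain ⟨h1, h2⟩ := concat_inj hw.symm
  subst h1; subst h2; subst hu
  refine ⟨u, rfl, ?_⟩
  rwa [felW_concat, felW_concat] at hS

lemma S0_of_S {σ : List W} {v u : W} (hσ : IsWorldV M σ)
    (hS : M.S (felW σ) v u) :
    S0 M (σ ++ [v]) (σ ++ [u]) := by
  have h1 := (M.S_dom _ _ _ hS).1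
  have h2 := (M.S_dom _ _ _ hS).2
  exact ⟨σ, ⟨hσ, world_concat M hσ h1, v, rfl⟩, ⟨hσ, world_concat M hσ h2, u, rfl⟩,
    by rwa [felW_concat, felW_concat]⟩
end

/-- The unravelling of a finite Veltman model is equivalent to it: for every
formula `B` and world `σ` of the unravelling, `𝒱₀, σ ⊨ B` iff `𝒱, last σ ⊨ B`. -/
theorem unravelling_equiv {W : Type*} [Inhabited W] [Finite W] (M : Veltman W) :
    ∀ (B : IFml) (σ : List W), IsWorldV M σ →
      (uforce M σ B ↔ vforce M (felW σ) B) := by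
  intro B
  induction B with
  | atom n => intro σ _; simp [uforce, vforce]
  | bot => intro σ _; simp [uforce, vforce]
  | imp A B ihA ihB =>
      intro σ hσ
      simp only [uforce, vforce]
      rw [ihA σ hσ, ihB σ hσ]
  | rhd A B ihA ihB =>
      intro σ hσ
      simp only [uforce, vforce]
      constructor
      · intro h v hRv hvA
        have hτ : IsWorldV M (σ ++ [v]) := world_concat M hσ hRv
        have hex : ∃ η, S0 M (σ ++ [v]) η ∧ uforce M η A := by
          refine ⟨σ ++ [v], S0_of_S M hσ (M.S_refl _ _ hRv), ?_⟩
          rw [ihA _ hτ, felW_concat]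
          exact hvA
        obtain ⟨η, hS0, hηB⟩ := h (σ ++ [v]) ⟨hσ, hτ, v, rfl⟩ hex
        obtain ⟨z, rfl, hSz⟩ := S0_concat M hS0
        have hτz : IsWorldV M (σ ++ [z]) :=
          world_concat M hσ (M.S_dom _ _ _ hSz).2
        refine ⟨z, hSz, ?_⟩
        rw [← felW_concat σ z, ← ihB _ hτz]
        exact hηB
      · rintro h τ ⟨-, hτ, v, rfl⟩ ⟨η, hS0, hηA⟩
        obtain ⟨u, rfl, hSu⟩ := S0_concat M hS0
        have hτu : IsWorldV M (σ ++ [u]) :=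
          world_concat M hσ (M.S_dom _ _ _ hSu).2
        have hRv : M.R (felW σ) v := chain_last M hσ.1 hτ.2
        have hA : vforce M u A := by
          rw [← felW_concat σ u, ← ihA _ hτu]; exact hηA
        obtain ⟨z, hSz, hzB⟩ := h u (M.S_dom _ _ _ hSu).2 hA
        refine ⟨σ ++ [z], ?_, ?_⟩
        · exact S0_of_S M hσ (M.S_trans _ _ _ _ hSu hSz)
        · have hτz : IsWorldV M (σ ++ [z]) :=
            world_concat M hσ (M.S_dom _ _ _ hSz).2
          rw [ihB _ hτz, felW_concat]
          exact hzB
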